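/- Let Ψ be an n_out × n_out positive definite diagonal matrix, A ∈ ℝ^{n_out×n_out}, B ∈ ℝ^{n_out×n_in} with A Aᵀ + B Bᵀ = I, b ∈ ℝ^{n_out}, and σ : ℝ → ℝ slope-restricted in [0,1] applied elementwise. Then the map h(x) = √2 · Aᵀ Ψ σ(√2 · Ψ⁻¹ B x + b) is 1-Lipschitz in the ℓ₂ norm. -/

import Mathlib

/-!
Write `Δ = x - y`, `z = σ(u(x)) - σ(u(y))` for the pre-activations `u` and `p = √2 Ψ z`, so that
`h x - h y = Aᵀ p`. Slope restriction gives `zᵢ² ≤ zᵢ (u(x) - u(y))ᵢ`, which after scaling by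
`2 dᵢ²` reads `p ⬝ p ≤ 2 (p ⬝ B Δ)`. With `w = Bᵀ p`, the constraint `A Aᵀ + B Bᵀ = 1` gives
`‖Aᵀ p‖² = ‖p‖² - ‖w‖² ≤ 2 (w ⬝ Δ) - ‖w‖² ≤ ‖Δ‖²`, the last step being `‖w - Δ‖² ≥ 0`.
-/

open Matrix

namespace Matrix

variable {R k m n : Type*} [Fintype k] [Fintype m] [Fintype n]

section Semiring

variable [CommSemiring R]

theorem dotProduct_mul_transpose_mulVec (M : Matrix m n R) (p : m → R) :
    p ⬝ᵥ (M * Mᵀ) *ᵥ p = Mᵀ *ᵥ p ⬝ᵥ Mᵀ *ᵥ p := by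
  rw [← mulVec_mulVec, dotProduct_mulVec, mulVec_transpose]

theorem transpose_mulVec_dotProduct_self_add [DecidableEq m] {A : Matrix m k R}
    {B : Matrix m n R} (hAB : A * Aᵀ + B * Bᵀ = 1) (p : m → R) :
    Aᵀ *ᵥ p ⬝ᵥ Aᵀ *ᵥ p + Bᵀ *ᵥ p ⬝ᵥ Bᵀ *ᵥ p = p ⬝ᵥ p := by
  simpa only [add_mulVec, dotProduct_add, one_mulVec, dotProduct_mul_transpose_mulVec] using
    congrArg (fun M => p ⬝ᵥ M *ᵥ p) hAB

end Semiring

theorem inv_diagonal_of_ne_zero [Field R] [DecidableEq n] {d : n → R} (hd : ∀ i, d i ≠ 0) :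
    (diagonal d)⁻¹ = diagonal d⁻¹ := by
  refine inv_eq_right_inv ?_
  rw [diagonal_mul_diagonal, ← diagonal_one]
  exact congrArg diagonal (funext fun i => mul_inv_cancel₀ (hd i))

variable [CommRing R] [LinearOrder R] [IsStrictOrderedRing R]

theorem dotProduct_self_nonneg (v : n → R) : 0 ≤ v ⬝ᵥ v :=
  Finset.sum_nonneg fun i _ => mul_self_nonneg (v i)

theorem transpose_mulVec_dotProduct_self_le [DecidableEq m] {A : Matrix m k R}
    {B : Matrix m n R} (hAB : A * Aᵀ + B * Bᵀ = 1) {p : m → R} {c : n → R}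
    (hp : p ⬝ᵥ p ≤ 2 * (p ⬝ᵥ B *ᵥ c)) :
    Aᵀ *ᵥ p ⬝ᵥ Aᵀ *ᵥ p ≤ c ⬝ᵥ c := by
  have hw : p ⬝ᵥ B *ᵥ c = Bᵀ *ᵥ p ⬝ᵥ c := by
    rw [dotProduct_mulVec, mulVec_transpose]
  have hsq := dotProduct_self_nonneg (Bᵀ *ᵥ p - c)
  simp only [sub_dotProduct, dotProduct_sub, dotProduct_comm c] at hsq
  linarith [transpose_mulVec_dotProduct_self_add hAB p]

end Matrix

theorem sq_sub_le_mul_sub_of_slope {R : Type*} [CommRing R] [LinearOrder R]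
    [IsStrictOrderedRing R] {σ : R → R}
    (hσ : ∀ s t, t ≤ s → 0 ≤ σ s - σ t ∧ σ s - σ t ≤ s - t) (s t : R) :
    (σ s - σ t) * (σ s - σ t) ≤ (σ s - σ t) * (s - t) := by
  rcases le_total t s with hts | hst
  · obtain ⟨hlo, hhi⟩ := hσ s t hts
    nlinarith
  · obtain ⟨hlo, hhi⟩ := hσ t s hst
    nlinarith

theorem mul_self_le_mul_self_mul_of_rescale {R : Type*} [Field R] [LinearOrder R]
    [IsStrictOrderedRing R] {a d z k : R} (hd : d ≠ 0) (h : z * z ≤ z * (a * (d⁻¹ * k))) :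
    a * (d * z) * (a * (d * z)) ≤ a * a * (a * (d * z) * k) :=
  calc a * (d * z) * (a * (d * z)) = a * a * d ^ 2 * (z * z) := by ring
    _ ≤ a * a * d ^ 2 * (z * (a * (d⁻¹ * k))) :=
        mul_le_mul_of_nonneg_left h (mul_nonneg (mul_self_nonneg a) (sq_nonneg d))
    _ = a * a * (a * (d * z) * k) := by field_simp

theorem EuclideanSpace.lipschitzWith_one_of_dotProduct_le {m n : Type*} [Fintype m] [Fintype n]
    {f : EuclideanSpace ℝ m → EuclideanSpace ℝ n}
    (hf : ∀ x y, (f x - f y).ofLp ⬝ᵥ (f x - f y).ofLp ≤ (x - y).ofLp ⬝ᵥ (x - y).ofLp) :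
    LipschitzWith 1 f := by
  refine LipschitzWith.of_dist_le_mul fun x y => ?_
  rw [NNReal.coe_one, one_mul, dist_eq_norm, dist_eq_norm]
  refine le_of_sq_le_sq ?_ (norm_nonneg _)
  rw [EuclideanSpace.real_norm_sq_eq, EuclideanSpace.real_norm_sq_eq]
  simpa only [dotProduct, sq] using hf x y

theorem stmt_5 (nin nout : ℕ) (d : Fin nout → ℝ) (hd : ∀ i, 0 < d i)
    (Ψ : Matrix (Fin nout) (Fin nout) ℝ) (hΨ : Ψ = Matrix.diagonal d)
    (A : Matrix (Fin nout) (Fin nout) ℝ) (B : Matrix (Fin nout) (Fin nin) ℝ)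
    (hAB : A * Aᵀ + B * Bᵀ = 1)
    (b : Fin nout → ℝ) (σ : ℝ → ℝ)
    (hslope : ∀ s t : ℝ, t ≤ s → 0 ≤ σ s - σ t ∧ σ s - σ t ≤ s - t)
    (h : EuclideanSpace ℝ (Fin nin) → EuclideanSpace ℝ (Fin nout))
    (hh : ∀ x : EuclideanSpace ℝ (Fin nin),
      h x = fun j => Real.sqrt 2 *
        (Aᵀ * Ψ).mulVec (fun i => σ (Real.sqrt 2 * (Ψ⁻¹ * B).mulVec x i + b i)) j) :
    LipschitzWith 1 h := by
  subst hΨ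
  rw [inv_diagonal_of_ne_zero fun i => (hd i).ne'] at hh
  refine EuclideanSpace.lipschitzWith_one_of_dotProduct_le fun x y => ?_
  set c := (x - y).ofLp
  set u := fun (v : EuclideanSpace ℝ (Fin nin)) i => √2 * ((diagonal d⁻¹ * B) *ᵥ v) i + b i
  set z : Fin nout → ℝ := fun i => σ (u x i) - σ (u y i)
  set p := √2 • (diagonal d *ᵥ z)
  have hdiff : (h x - h y).ofLp = Aᵀ *ᵥ p := by
    have hhu (v) : (h v).ofLp = √2 • (Aᵀ *ᵥ diagonal d *ᵥ fun i => σ (u v i)) := by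
      rw [hh, mulVec_mulVec]
      rfl
    rw [WithLp.ofLp_sub, hhu, hhu, ← smul_sub, ← mulVec_sub, ← mulVec_sub, mulVec_smul]
    rfl
  have hu (i) : u x i - u y i = √2 * ((d i)⁻¹ * (B *ᵥ c) i) := by
    simp only [u, c, WithLp.ofLp_sub, ← mulVec_mulVec, mulVec_sub, mulVec_diagonal,
      Pi.sub_apply, Pi.inv_apply]
    ring
  have hp : p ⬝ᵥ p ≤ 2 * (p ⬝ᵥ B *ᵥ c) := by
    simp only [dotProduct, Finset.mul_sum]
    refine Finset.sum_le_sum fun i _ => ?_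
    have hpi : p i = √2 * (d i * z i) := by
      simp only [p, Pi.smul_apply, mulVec_diagonal, smul_eq_mul]
    have hzi : z i * z i ≤ z i * (u x i - u y i) :=
      sq_sub_le_mul_sub_of_slope hslope (u x i) (u y i)
    rw [hu] at hzi
    simpa only [hpi, Real.mul_self_sqrt zero_le_two] using
      mul_self_le_mul_self_mul_of_rescale (hd i).ne' hzi
  rw [hdiff]
  exact transpose_mulVec_dotProduct_self_le hAB hp
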